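/- arXiv:1111.4174 — 2 statements merged into one kernel-verified Lean document; each statement's English description precedes it below -/
import Mathlib

section
/- Let A1 and A2 be discrete random variables on finite sets 𝒜1 and 𝒜2, let 𝒜3 be a finite set, and let F be a random variable taking values in a set ℱ of functions from 𝒜1 to 𝒜3. Assume that A1 and F are conditionally independent given A2, and that for every fixed realization a2 of A2 the conditional distribution of F given A2 = a2 satisfies the two-universal condition. Then for all 0 ≤ ρ ≤ 1, E_f[ exp( −ρ · H(F(A1) | A2, F = f) ) ] ≤ |𝒜3|^{−ρ} + E[ P_{A1|A2}(A1|A2)^ρ ], where H(F(A1) | A2, F = f) is the conditional Shannon entropy (in nats) of f(A1) given A2, for the fixed function f. -/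
set_option linter.unusedSectionVars false


open scoped Classical
open Finset

noncomputable section

variable {Ω : Type*} [Fintype Ω]

/-- The probability P(X = x) of a random variable `X` on the finite
probability space `Ω` with probability mass function `p`. -/
def mprob {𝒳 : Type*} (p : Ω → ℝ) (X : Ω → 𝒳) (x : 𝒳) : ℝ :=
  ∑ ω, if X ω = x then p ω else 0

/-- The joint probability P(X = x, Y = y). -/
def jprob {𝒳 𝒴 : Type*} (p : Ω → ℝ) (X : Ω → 𝒳) (Y : Ω → 𝒴) (x : 𝒳) (y : 𝒴) : ℝ :=
  ∑ ω, if X ω = x ∧ Y ω = y then p ω else 0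

/-- The conditional probability P(X = x | Y = y). -/
def cprob {𝒳 𝒴 : Type*} (p : Ω → ℝ) (X : Ω → 𝒳) (Y : Ω → 𝒴) (x : 𝒳) (y : 𝒴) : ℝ :=
  jprob p X Y x y / mprob p Y y

/-- The conditional probability mass function of `p` given the event `Y = y`. -/
def condDist {𝒴 : Type*} (p : Ω → ℝ) (Y : Ω → 𝒴) (y : 𝒴) : Ω → ℝ :=
  fun ω => if Y ω = y then p ω / mprob p Y y else 0

/-- The probability of an event `E`. -/
def prEvent (p : Ω → ℝ) (E : Ω → Prop) : ℝ :=
  ∑ ω, if E ω then p ω else 0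

/-- Shannon entropy H(X) in nats. -/
def entropy {𝒳 : Type*} [Fintype 𝒳] (p : Ω → ℝ) (X : Ω → 𝒳) : ℝ :=
  -∑ x, mprob p X x * Real.log (mprob p X x)

/-- Conditional Shannon entropy H(X|Y) in nats. -/
def condEntropy {𝒳 𝒴 : Type*} [Fintype 𝒳] [Fintype 𝒴] (p : Ω → ℝ) (X : Ω → 𝒳) (Y : Ω → 𝒴) : ℝ :=
  -∑ x, ∑ y, jprob p X Y x y * Real.log (cprob p X Y x y)

/-- Shannon mutual information I(X;Y) in nats. -/
def mutInfo {𝒳 𝒴 : Type*} [Fintype 𝒳] [Fintype 𝒴] (p : Ω → ℝ) (X : Ω → 𝒳) (Y : Ω → 𝒴) : ℝ :=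
  ∑ x, ∑ y, jprob p X Y x y * Real.log (jprob p X Y x y / (mprob p X x * mprob p Y y))

/-- The expectation E[ P_{X|Y}(X|Y)^ρ ]. -/
def expPow {𝒳 𝒴 : Type*} (p : Ω → ℝ) (X : Ω → 𝒳) (Y : Ω → 𝒴) (ρ : ℝ) : ℝ :=
  ∑ ω, p ω * (cprob p X Y (X ω) (Y ω)) ^ ρ

end


/-! ### Auxiliary lemmas for the proof -/

noncomputable section PAHelpers

variable {Ω : Type*} [Fintype Ω]

section Helpers

variable {𝒳 𝒴 ℱ : Type*} [Fintype 𝒳] [Fintype 𝒴]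

lemma PA_jprob_nonneg (p : Ω → ℝ) (hp0 : ∀ ω, 0 ≤ p ω) (X : Ω → 𝒳) (Y : Ω → 𝒴) (x : 𝒳) (y : 𝒴) :
    0 ≤ jprob p X Y x y :=
  Finset.sum_nonneg fun ω _ => by split <;> simp [hp0 ω]

lemma PA_sum_jprob_left (p : Ω → ℝ) (X : Ω → 𝒳) (Y : Ω → 𝒴) (y : 𝒴) :
    ∑ x, jprob p X Y x y = mprob p Y y := by
  unfold jprob mprob
  rw [Finset.sum_comm]
  refine Finset.sum_congr rfl fun ω _ => ?_
  by_cases h : Y ω = y <;> simp [h]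

lemma PA_sum_mprob (p : Ω → ℝ) (Y : Ω → 𝒴) :
    ∑ y, mprob p Y y = ∑ ω, p ω := by
  unfold mprob
  rw [Finset.sum_comm]
  exact Finset.sum_congr rfl fun ω _ => by simp

lemma PA_jprob_le_mprob (p : Ω → ℝ) (hp0 : ∀ ω, 0 ≤ p ω) (X : Ω → 𝒳) (Y : Ω → 𝒴) (x : 𝒳) (y : 𝒴) :
    jprob p X Y x y ≤ mprob p Y y := by
  refine Finset.sum_le_sum fun ω _ => ?_
  by_cases h1 : X ω = x <;> by_cases h2 : Y ω = y <;> simp [h1, h2, hp0 ω]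

lemma PA_jprob_condDist (p : Ω → ℝ) (F : Ω → ℱ) (f : ℱ) (X : Ω → 𝒳) (Y : Ω → 𝒴) (x : 𝒳) (y : 𝒴) :
    jprob (condDist p F f) X Y x y
      = prEvent p (fun ω => X ω = x ∧ F ω = f ∧ Y ω = y) / mprob p F f := by
  unfold jprob condDist prEvent
  rw [Finset.sum_div]
  refine Finset.sum_congr rfl fun ω _ => ?_
  by_cases h1 : X ω = x <;> by_cases h2 : F ω = f <;> by_cases h3 : Y ω = y <;>
    simp [h1, h2, h3]

lemma PA_mprob_condDist (p : Ω → ℝ) (F : Ω → ℱ) (f : ℱ) (Y : Ω → 𝒴) (y : 𝒴) :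
    mprob (condDist p F f) Y y = jprob p F Y f y / mprob p F f := by
  unfold mprob condDist jprob
  rw [Finset.sum_div]
  refine Finset.sum_congr rfl fun ω _ => ?_
  by_cases h2 : F ω = f <;> by_cases h3 : Y ω = y <;> simp [h2, h3, mprob]

lemma PA_condDist_nonneg (p : Ω → ℝ) (hp0 : ∀ ω, 0 ≤ p ω) (F : Ω → ℱ) (f : ℱ) (ω : Ω) :
    0 ≤ condDist p F f ω := by
  unfold condDist
  split
  · exact div_nonneg (hp0 ω) (Finset.sum_nonneg fun ω' _ => by split <;> simp [hp0 ω'])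
  · exact le_refl 0

lemma PA_sum_condDist (p : Ω → ℝ) (F : Ω → ℱ) (f : ℱ) (hQ : mprob p F f ≠ 0) :
    ∑ ω, condDist p F f ω = 1 := by
  unfold condDist
  have : ∀ ω, (if F ω = f then p ω / mprob p F f else 0)
      = (if F ω = f then p ω else 0) / mprob p F f := by
    intro ω; split <;> simp
  simp_rw [this, ← Finset.sum_div]
  exact div_self (by simpa [mprob] using hQ)

lemma PA_jensen_exp (s : Ω → ℝ) (hs0 : ∀ ω, 0 ≤ s ω) (hs1 : ∑ ω, s ω = 1)
    (X : Ω → 𝒳) (Y : Ω → 𝒴) (ρ : ℝ) :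
    Real.exp (-ρ * condEntropy s X Y)
      ≤ ∑ x, ∑ y, jprob s X Y x y * cprob s X Y x y ^ ρ := by
  have hw : ∀ i : 𝒳 × 𝒴, 0 ≤ jprob s X Y i.1 i.2 := fun i =>
    PA_jprob_nonneg s hs0 X Y i.1 i.2
  have hsum : ∑ i : 𝒳 × 𝒴, jprob s X Y i.1 i.2 = 1 := by
    rw [Fintype.sum_prod_type, Finset.sum_comm]
    simp_rw [PA_sum_jprob_left]
    rw [PA_sum_mprob, hs1]
  have harg : -ρ * condEntropy s X Y
      = ∑ i : 𝒳 × 𝒴, jprob s X Y i.1 i.2 • (ρ * Real.log (cprob s X Y i.1 i.2)) := by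
    rw [Fintype.sum_prod_type]
    unfold condEntropy
    rw [neg_mul, mul_neg, neg_neg, Finset.mul_sum]
    refine Finset.sum_congr rfl fun x _ => ?_
    rw [Finset.mul_sum]
    exact Finset.sum_congr rfl fun y _ => by simp [smul_eq_mul]; ring
  rw [harg]
  refine (convexOn_exp.map_sum_le (fun i _ => hw i) hsum (fun i _ => Set.mem_univ _)).trans ?_
  rw [Fintype.sum_prod_type]
  refine le_of_eq (Finset.sum_congr rfl fun x _ => Finset.sum_congr rfl fun y _ => ?_)
  by_cases hj : jprob s X Y x y = 0
  · simp [hj]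
  · have hjpos : 0 < jprob s X Y x y := lt_of_le_of_ne (hw (x, y)) (Ne.symm hj)
    have hm : 0 < mprob s Y y := lt_of_lt_of_le hjpos (PA_jprob_le_mprob s hs0 X Y x y)
    have hc : 0 < cprob s X Y x y := div_pos hjpos hm
    rw [smul_eq_mul, Real.rpow_def_of_pos hc, mul_comm (Real.log _) ρ]


lemma PA_prEvent_mono (p : Ω → ℝ) (hp0 : ∀ ω, 0 ≤ p ω) {E E' : Ω → Prop}
    (h : ∀ ω, E ω → E' ω) : prEvent p E ≤ prEvent p E' := by
  refine Finset.sum_le_sum fun ω _ => ?_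
  by_cases hE : E ω
  · simp [hE, h ω hE]
  · by_cases hE' : E' ω <;> simp [hE, hE', hp0 ω]

lemma PA_jprob_comp {𝒵 : Type*} [Fintype 𝒵] (s : Ω → ℝ) (X : Ω → 𝒳) (Y : Ω → 𝒴)
    (g : 𝒳 → 𝒵) (z : 𝒵) (y : 𝒴) :
    jprob s (fun ω => g (X ω)) Y z y = ∑ x, if g x = z then jprob s X Y x y else 0 := by
  unfold jprob
  have h1 : ∀ x : 𝒳, (if g x = z then (∑ ω, if X ω = x ∧ Y ω = y then s ω else 0) else 0)
      = ∑ ω, if g x = z ∧ X ω = x ∧ Y ω = y then s ω else 0 := by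
    intro x
    split
    · exact Finset.sum_congr rfl fun ω _ => by simp_all
    · rw [eq_comm, Finset.sum_eq_zero]; intro ω _; simp_all
  simp_rw [h1]
  rw [Finset.sum_comm]
  refine Finset.sum_congr rfl fun ω _ => ?_
  by_cases h3 : Y ω = y
  · simp only [h3, and_true]
    simp_rw [and_comm (a := g _ = z), ite_and]
    rw [Finset.sum_ite_eq univ (X ω) (fun x => if g x = z then s ω else 0)]
    simp
  · simp [h3]

lemma PA_sum_E3 {ℱ' : Type*} [Fintype ℱ'] (p : Ω → ℝ) (A : Ω → 𝒳) (F : Ω → ℱ') (B : Ω → 𝒴)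
    (a : 𝒳) (b : 𝒴) :
    ∑ f, prEvent p (fun ω => A ω = a ∧ F ω = f ∧ B ω = b) = jprob p A B a b := by
  unfold prEvent jprob
  rw [Finset.sum_comm]
  refine Finset.sum_congr rfl fun ω _ => ?_
  by_cases h1 : A ω = a <;> by_cases h3 : B ω = b <;> simp [h1, h3]

lemma PA_prEvent_condDist (p : Ω → ℝ) (Y : Ω → 𝒴) (y : 𝒴) (E : Ω → Prop) :
    prEvent (condDist p Y y) E
      = (∑ ω, if E ω ∧ Y ω = y then p ω else 0) / mprob p Y y := by
  unfold prEvent condDist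
  rw [Finset.sum_div]
  refine Finset.sum_congr rfl fun ω _ => ?_
  by_cases h1 : E ω <;> by_cases h2 : Y ω = y <;> simp [h1, h2, mprob]

lemma PA_collision {𝒜1 𝒜3 : Type*} [Fintype 𝒜1] [Fintype 𝒜3] (p : Ω → ℝ)
    (F : Ω → (𝒜1 → 𝒜3)) (A2 : Ω → 𝒴) (a2 : 𝒴) (x1 x2 : 𝒜1) :
    ∑ f : 𝒜1 → 𝒜3, (if f x1 = f x2 then jprob p F A2 f a2 else 0)
      = ∑ ω, if F ω x1 = F ω x2 ∧ A2 ω = a2 then p ω else 0 := by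
  have h1 : ∀ f : 𝒜1 → 𝒜3, (if f x1 = f x2 then jprob p F A2 f a2 else 0)
      = ∑ ω, if f x1 = f x2 ∧ F ω = f ∧ A2 ω = a2 then p ω else 0 := by
    intro f
    unfold jprob
    split
    · exact Finset.sum_congr rfl fun ω _ => by simp_all
    · rw [eq_comm, Finset.sum_eq_zero]; intro ω _; simp_all
  simp_rw [h1]
  rw [Finset.sum_comm]
  refine Finset.sum_congr rfl fun ω _ => ?_
  by_cases h3 : A2 ω = a2
  · simp only [h3, and_true]
    have h2 : ∀ f : 𝒜1 → 𝒜3, (if f x1 = f x2 ∧ F ω = f then p ω else 0)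
        = if F ω = f then (if f x1 = f x2 then p ω else 0) else 0 := by
      intro f
      by_cases hf : F ω = f <;> by_cases hx : f x1 = f x2 <;> simp [hf, hx]
    simp_rw [h2]
    rw [Finset.sum_ite_eq univ (F ω) (fun f => if f x1 = f x2 then p ω else 0)]
    simp
  · simp [h3]


lemma PA_mprob_nonneg (p : Ω → ℝ) (hp0 : ∀ ω, 0 ≤ p ω) (X : Ω → 𝒳) (x : 𝒳) :
    0 ≤ mprob p X x :=
  Finset.sum_nonneg fun ω _ => by split <;> simp [hp0 ω]

lemma PA_prEvent_nonneg (p : Ω → ℝ) (hp0 : ∀ ω, 0 ≤ p ω) (E : Ω → Prop) :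
    0 ≤ prEvent p E :=
  Finset.sum_nonneg fun ω _ => by split <;> simp [hp0 ω]

lemma PA_cprob_nonneg (p : Ω → ℝ) (hp0 : ∀ ω, 0 ≤ p ω) (X : Ω → 𝒳) (Y : Ω → 𝒴) (x : 𝒳) (y : 𝒴) :
    0 ≤ cprob p X Y x y :=
  div_nonneg (PA_jprob_nonneg p hp0 X Y x y) (PA_mprob_nonneg p hp0 Y y)

lemma PA_sum_rot {α β γ : Type*} [Fintype α] [Fintype β] [Fintype γ] (h : α → β → γ → ℝ) :
    ∑ a, ∑ b, ∑ c, h a b c = ∑ c, ∑ b, ∑ a, h a b c := by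
  have h1 : ∀ a : α, ∑ b, ∑ c, h a b c = ∑ c, ∑ b, h a b c := fun a => Finset.sum_comm
  simp_rw [h1]
  rw [Finset.sum_comm]
  exact Finset.sum_congr rfl fun c _ => Finset.sum_comm

lemma PA_claim1 {𝒜1 𝒜2 𝒜3 : Type*} [Fintype 𝒜1] [Fintype 𝒜2] [Fintype 𝒜3]
    (p : Ω → ℝ) (hp0 : ∀ ω, 0 ≤ p ω)
    (A1 : Ω → 𝒜1) (A2 : Ω → 𝒜2) (F : Ω → (𝒜1 → 𝒜3))
    (hindep : ∀ (a1 : 𝒜1) (f : 𝒜1 → 𝒜3) (a2 : 𝒜2),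
      prEvent p (fun ω => A1 ω = a1 ∧ F ω = f ∧ A2 ω = a2) * mprob p A2 a2
        = jprob p A1 A2 a1 a2 * jprob p F A2 f a2)
    (ρ : ℝ) (f : 𝒜1 → 𝒜3) :
    mprob p F f * Real.exp (-ρ * condEntropy (condDist p F f) (fun ω => f (A1 ω)) A2)
      ≤ ∑ a1, ∑ a2, prEvent p (fun ω => A1 ω = a1 ∧ F ω = f ∧ A2 ω = a2)
          * (∑ a1', if f a1' = f a1 then cprob p A1 A2 a1' a2 else 0) ^ ρ := by
  have hE0 : ∀ a1 a2, 0 ≤ prEvent p (fun ω => A1 ω = a1 ∧ F ω = f ∧ A2 ω = a2) :=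
    fun a1 a2 => PA_prEvent_nonneg p hp0 _
  have hG0 : ∀ (a1 : 𝒜1) (a2 : 𝒜2),
      0 ≤ ∑ a1', if f a1' = f a1 then cprob p A1 A2 a1' a2 else 0 := fun a1 a2 =>
    Finset.sum_nonneg fun a1' _ => by
      split
      · exact PA_cprob_nonneg p hp0 A1 A2 a1' a2
      · exact le_refl 0
  by_cases hQ : mprob p F f = 0
  · rw [hQ, zero_mul]
    exact Finset.sum_nonneg fun a1 _ => Finset.sum_nonneg fun a2 _ =>
      mul_nonneg (hE0 a1 a2) (Real.rpow_nonneg (hG0 a1 a2) ρ)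
  · have hQ0 : 0 ≤ mprob p F f := PA_mprob_nonneg p hp0 F f
    have key := PA_jensen_exp (condDist p F f) (PA_condDist_nonneg p hp0 F f)
      (PA_sum_condDist p F f hQ) (fun ω => f (A1 ω)) A2 ρ
    refine le_trans (mul_le_mul_of_nonneg_left key hQ0) (le_of_eq ?_)
    have e1 : ∀ (a3 : 𝒜3) (a2 : 𝒜2), jprob (condDist p F f) (fun ω => f (A1 ω)) A2 a3 a2
        = ∑ a1, if f a1 = a3 then jprob (condDist p F f) A1 A2 a1 a2 else 0 :=
      fun a3 a2 => PA_jprob_comp (condDist p F f) A1 A2 f a3 a2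
    have e2 : ∀ (a3 : 𝒜3) (a2 : 𝒜2), cprob (condDist p F f) (fun ω => f (A1 ω)) A2 a3 a2
        = ∑ a1', if f a1' = a3 then cprob (condDist p F f) A1 A2 a1' a2 else 0 := by
      intro a3 a2
      unfold cprob
      rw [e1, Finset.sum_div]
      exact Finset.sum_congr rfl fun a1' _ => by split <;> simp
    have step1 : mprob p F f * ∑ a3, ∑ a2, jprob (condDist p F f) (fun ω => f (A1 ω)) A2 a3 a2
          * cprob (condDist p F f) (fun ω => f (A1 ω)) A2 a3 a2 ^ ρ
        = ∑ a3 : 𝒜3, ∑ a2 : 𝒜2, ∑ a1 : 𝒜1, (if f a1 = a3 then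
            (mprob p F f * jprob (condDist p F f) A1 A2 a1 a2)
              * cprob (condDist p F f) (fun ω => f (A1 ω)) A2 a3 a2 ^ ρ else 0) := by
      rw [Finset.mul_sum]
      refine Finset.sum_congr rfl fun a3 _ => ?_
      rw [Finset.mul_sum]
      refine Finset.sum_congr rfl fun a2 _ => ?_
      rw [e1, Finset.sum_mul, Finset.mul_sum]
      refine Finset.sum_congr rfl fun a1 _ => ?_
      split
      · ring
      · simp
    rw [step1, PA_sum_rot (fun a3 a2 a1 => _)]
    refine Finset.sum_congr rfl fun a1 _ => Finset.sum_congr rfl fun a2 _ => ?_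
    rw [Finset.sum_ite_eq univ (f a1) (fun a3 =>
      (mprob p F f * jprob (condDist p F f) A1 A2 a1 a2)
        * cprob (condDist p F f) (fun ω => f (A1 ω)) A2 a3 a2 ^ ρ)]
    rw [if_pos (mem_univ _)]
    have hj : mprob p F f * jprob (condDist p F f) A1 A2 a1 a2
        = prEvent p (fun ω => A1 ω = a1 ∧ F ω = f ∧ A2 ω = a2) := by
      rw [PA_jprob_condDist, mul_comm, div_mul_cancel₀ _ hQ]
    rw [hj, e2]
    by_cases hE : prEvent p (fun ω => A1 ω = a1 ∧ F ω = f ∧ A2 ω = a2) = 0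
    · rw [hE, zero_mul, zero_mul]
    · have hEpos : 0 < prEvent p (fun ω => A1 ω = a1 ∧ F ω = f ∧ A2 ω = a2) :=
        lt_of_le_of_ne (hE0 a1 a2) (Ne.symm hE)
      have hle : prEvent p (fun ω => A1 ω = a1 ∧ F ω = f ∧ A2 ω = a2)
          ≤ jprob p F A2 f a2 := by
        have : prEvent p (fun ω => F ω = f ∧ A2 ω = a2) = jprob p F A2 f a2 := by
          unfold prEvent jprob
          exact Finset.sum_congr rfl fun ω _ => by by_cases h : F ω = f ∧ A2 ω = a2 <;> simp [h]
        rw [← this]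
        exact PA_prEvent_mono p hp0 fun ω h => ⟨h.2.1, h.2.2⟩
      have hjFpos : 0 < jprob p F A2 f a2 := lt_of_lt_of_le hEpos hle
      have hq2 : mprob p A2 a2 ≠ 0 :=
        (lt_of_lt_of_le hjFpos (PA_jprob_le_mprob p hp0 F A2 f a2)).ne'
      have hcs : ∀ a1', cprob (condDist p F f) A1 A2 a1' a2 = cprob p A1 A2 a1' a2 := by
        intro a1'
        unfold cprob
        rw [PA_jprob_condDist, PA_mprob_condDist, div_div_div_cancel_right₀ hQ,
          div_eq_div_iff hjFpos.ne' hq2]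
        exact hindep a1' f a2
      simp_rw [hcs]


lemma PA_claim4 {𝒜1 𝒜2 𝒜3 : Type*} [Fintype 𝒜1] [Fintype 𝒜2] [Fintype 𝒜3]
    (p : Ω → ℝ) (hp0 : ∀ ω, 0 ≤ p ω)
    (A1 : Ω → 𝒜1) (A2 : Ω → 𝒜2) (F : Ω → (𝒜1 → 𝒜3))
    (hindep : ∀ (a1 : 𝒜1) (f : 𝒜1 → 𝒜3) (a2 : 𝒜2),
      prEvent p (fun ω => A1 ω = a1 ∧ F ω = f ∧ A2 ω = a2) * mprob p A2 a2
        = jprob p A1 A2 a1 a2 * jprob p F A2 f a2)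
    (htu : ∀ (a2 : 𝒜2) (x1 x2 : 𝒜1), x1 ≠ x2 →
      prEvent (condDist p A2 a2) (fun ω => F ω x1 = F ω x2) ≤ 1 / (Fintype.card 𝒜3 : ℝ))
    (ρ : ℝ) (hρ0 : 0 ≤ ρ) (hρ1 : ρ ≤ 1) (a1 : 𝒜1) (a2 : 𝒜2) :
    ∑ f : 𝒜1 → 𝒜3, prEvent p (fun ω => A1 ω = a1 ∧ F ω = f ∧ A2 ω = a2)
        * (∑ a1', if a1' ≠ a1 ∧ f a1' = f a1 then cprob p A1 A2 a1' a2 else 0) ^ ρ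
      ≤ jprob p A1 A2 a1 a2 * (Fintype.card 𝒜3 : ℝ) ^ (-ρ) := by
  set D : (𝒜1 → 𝒜3) → ℝ :=
    fun f => ∑ a1', if a1' ≠ a1 ∧ f a1' = f a1 then cprob p A1 A2 a1' a2 else 0 with hD
  have hD0 : ∀ f, 0 ≤ D f := fun f => Finset.sum_nonneg fun a1' _ => by
    split
    · exact PA_cprob_nonneg p hp0 A1 A2 a1' a2
    · exact le_refl 0
  have hprA2 : ∀ (E : Ω → Prop), (∀ ω, E ω → A2 ω = a2) → prEvent p E ≤ mprob p A2 a2 := by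
    intro E hE
    have h2 : prEvent p (fun ω => A2 ω = a2) = mprob p A2 a2 := by
      unfold prEvent mprob
      exact Finset.sum_congr rfl fun ω _ => by by_cases h : A2 ω = a2 <;> simp [h]
    rw [← h2]
    exact PA_prEvent_mono p hp0 hE
  by_cases hq : mprob p A2 a2 = 0
  · have hE : ∀ f, prEvent p (fun ω => A1 ω = a1 ∧ F ω = f ∧ A2 ω = a2) = 0 := fun f =>
      le_antisymm ((hprA2 _ fun ω h => h.2.2).trans_eq hq) (PA_prEvent_nonneg p hp0 _)
    have hj : jprob p A1 A2 a1 a2 = 0 :=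
      le_antisymm ((PA_jprob_le_mprob p hp0 A1 A2 a1 a2).trans_eq hq)
        (PA_jprob_nonneg p hp0 A1 A2 a1 a2)
    simp [hE, hj]
  · set w : (𝒜1 → 𝒜3) → ℝ := fun f => jprob p F A2 f a2 / mprob p A2 a2 with hw
    have hw0 : ∀ f, 0 ≤ w f := fun f =>
      div_nonneg (PA_jprob_nonneg p hp0 F A2 f a2) (PA_mprob_nonneg p hp0 A2 a2)
    have hw1 : ∑ f, w f = 1 := by
      rw [hw, ← Finset.sum_div, PA_sum_jprob_left, div_self hq]
    have hEw : ∀ f, prEvent p (fun ω => A1 ω = a1 ∧ F ω = f ∧ A2 ω = a2)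
        = jprob p A1 A2 a1 a2 * w f := by
      intro f
      rw [hw]
      rw [show jprob p A1 A2 a1 a2 * (jprob p F A2 f a2 / mprob p A2 a2)
        = jprob p A1 A2 a1 a2 * jprob p F A2 f a2 / mprob p A2 a2 from
          (mul_div_assoc _ _ _).symm]
      rw [eq_div_iff hq]
      exact hindep a1 f a2
    simp_rw [hEw, mul_assoc]
    rw [← Finset.mul_sum]
    refine mul_le_mul_of_nonneg_left ?_ (PA_jprob_nonneg p hp0 A1 A2 a1 a2)
    have jensen := (Real.concaveOn_rpow hρ0 hρ1).le_map_sum (t := Finset.univ)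
      (w := w) (p := D) (fun f _ => hw0 f) hw1 (fun f _ => hD0 f)
    simp only [smul_eq_mul] at jensen
    have hpr : ∀ a1', a1' ≠ a1 → (∑ f, if f a1' = f a1 then w f else 0)
        = prEvent (condDist p A2 a2) (fun ω => F ω a1' = F ω a1) := by
      intro a1' _
      rw [PA_prEvent_condDist, ← PA_collision p F A2 a2 a1' a1, Finset.sum_div]
      refine Finset.sum_congr rfl fun f _ => ?_
      rw [hw]
      split <;> simp
    have hsumc : ∑ a1', cprob p A1 A2 a1' a2 = 1 := by
      unfold cprob
      rw [← Finset.sum_div, PA_sum_jprob_left, div_self hq]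
    have hinner : ∑ f, w f * D f ≤ 1 / (Fintype.card 𝒜3 : ℝ) := by
      have step_a : ∀ f, w f * D f
          = ∑ a1', if a1' ≠ a1 ∧ f a1' = f a1 then cprob p A1 A2 a1' a2 * w f else 0 := by
        intro f
        rw [hD, Finset.mul_sum]
        refine Finset.sum_congr rfl fun a1' _ => ?_
        split
        · ring
        · simp
      calc ∑ f, w f * D f
          = ∑ a1', ∑ f, (if a1' ≠ a1 ∧ f a1' = f a1 then cprob p A1 A2 a1' a2 * w f else 0) := by
            simp_rw [step_a]; exact Finset.sum_comm
        _ = ∑ a1', if a1' ≠ a1 then cprob p A1 A2 a1' a2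
              * prEvent (condDist p A2 a2) (fun ω => F ω a1' = F ω a1) else 0 := by
            refine Finset.sum_congr rfl fun a1' _ => ?_
            by_cases hne : a1' = a1
            · simp [hne]
            · rw [if_pos hne, ← hpr a1' hne, Finset.mul_sum]
              refine Finset.sum_congr rfl fun f _ => ?_
              by_cases hf : f a1' = f a1 <;> simp [hf, hne, mul_comm]
        _ ≤ ∑ a1', cprob p A1 A2 a1' a2 * (1 / (Fintype.card 𝒜3 : ℝ)) := by
            refine Finset.sum_le_sum fun a1' _ => ?_
            by_cases hne : a1' = a1
            · simp only [hne, ne_eq, not_true_eq_false, if_false]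
              exact mul_nonneg (PA_cprob_nonneg p hp0 A1 A2 a1 a2) (by positivity)
            · rw [if_pos hne]
              exact mul_le_mul_of_nonneg_left (htu a2 a1' a1 hne)
                (PA_cprob_nonneg p hp0 A1 A2 a1' a2)
        _ = 1 / (Fintype.card 𝒜3 : ℝ) := by rw [← Finset.sum_mul, hsumc, one_mul]
    calc ∑ f, w f * D f ^ ρ ≤ (∑ f, w f * D f) ^ ρ := jensen
      _ ≤ (1 / (Fintype.card 𝒜3 : ℝ)) ^ ρ :=
          Real.rpow_le_rpow
            (Finset.sum_nonneg fun f _ => mul_nonneg (hw0 f) (hD0 f)) hinner hρ0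
      _ = (Fintype.card 𝒜3 : ℝ) ^ (-ρ) := by
          rw [one_div, Real.inv_rpow (Nat.cast_nonneg _), ← Real.rpow_neg (Nat.cast_nonneg _)]


lemma PA_sum_fiber (p : Ω → ℝ) (X : Ω → 𝒳) (Y : Ω → 𝒴) (g : 𝒳 → 𝒴 → ℝ) :
    ∑ ω, p ω * g (X ω) (Y ω) = ∑ x, ∑ y, jprob p X Y x y * g x y := by
  unfold jprob
  simp_rw [Finset.sum_mul]
  have h1 : ∀ x : 𝒳, (∑ y, ∑ ω, (if X ω = x ∧ Y ω = y then p ω else 0) * g x y)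
      = ∑ ω, ∑ y, (if X ω = x ∧ Y ω = y then p ω else 0) * g x y := fun x => Finset.sum_comm
  simp_rw [h1]
  rw [Finset.sum_comm]
  refine Finset.sum_congr rfl fun ω _ => ?_
  simp [ite_and]

lemma PA_rpow_add_le (x y ρ : ℝ) (hx : 0 ≤ x) (hy : 0 ≤ y) (h0 : 0 ≤ ρ) (h1 : ρ ≤ 1) :
    (x + y) ^ ρ ≤ x ^ ρ + y ^ ρ := by
  have := NNReal.rpow_add_le_add_rpow (⟨x, hx⟩ : NNReal) ⟨y, hy⟩ h0 h1
  exact_mod_cast this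

lemma PA_rot2 {α β γ : Type*} [Fintype α] [Fintype β] [Fintype γ] (h : α → β → γ → ℝ) :
    ∑ a, ∑ b, ∑ c, h a b c = ∑ b, ∑ c, ∑ a, h a b c := by
  rw [PA_sum_rot]
  rw [Finset.sum_comm]

end Helpers

end PAHelpers

/-- key lemma for privacy amplification.
If `A1` and `F` are conditionally independent given `A2` and, conditioned on
each realization `a2` of `A2`, the random function `F : 𝒜1 → 𝒜3` satisfies the
two-universal hashing condition, then for all `0 ≤ ρ ≤ 1`,
`E_f[exp(−ρ · H(F(A1) | A2, F = f))] ≤ |𝒜3|^{−ρ} + E[P_{A1|A2}(A1|A2)^ρ]`. -/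
theorem privacy_amplification_entropy_lemma
    {Ω 𝒜1 𝒜2 𝒜3 : Type*} [Fintype Ω] [Fintype 𝒜1] [Fintype 𝒜2] [Fintype 𝒜3]
    (p : Ω → ℝ) (hp0 : ∀ ω, 0 ≤ p ω) (hp1 : ∑ ω, p ω = 1)
    (A1 : Ω → 𝒜1) (A2 : Ω → 𝒜2) (F : Ω → (𝒜1 → 𝒜3))
    -- A1 and F are conditionally independent given A2
    (hindep : ∀ (a1 : 𝒜1) (f : 𝒜1 → 𝒜3) (a2 : 𝒜2),
      prEvent p (fun ω => A1 ω = a1 ∧ F ω = f ∧ A2 ω = a2) * mprob p A2 a2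
        = jprob p A1 A2 a1 a2 * jprob p F A2 f a2)
    -- conditioned on any realization a2 of A2, F is two-universal
    (htu : ∀ (a2 : 𝒜2) (x1 x2 : 𝒜1), x1 ≠ x2 →
      prEvent (condDist p A2 a2) (fun ω => F ω x1 = F ω x2) ≤ 1 / (Fintype.card 𝒜3 : ℝ))
    (ρ : ℝ) (hρ0 : 0 ≤ ρ) (hρ1 : ρ ≤ 1) :
    ∑ f : 𝒜1 → 𝒜3, mprob p F f *
        Real.exp (-ρ * condEntropy (condDist p F f) (fun ω => f (A1 ω)) A2)
      ≤ (Fintype.card 𝒜3 : ℝ) ^ (-ρ) + expPow p A1 A2 ρ := by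
  classical
  have hc0 : ∀ (a1' : 𝒜1) (a2 : 𝒜2), 0 ≤ cprob p A1 A2 a1' a2 := fun a1' a2 =>
    PA_cprob_nonneg p hp0 A1 A2 a1' a2
  have hE0 : ∀ (a1 : 𝒜1) (f : 𝒜1 → 𝒜3) (a2 : 𝒜2),
      0 ≤ prEvent p (fun ω => A1 ω = a1 ∧ F ω = f ∧ A2 ω = a2) := fun _ _ _ =>
    PA_prEvent_nonneg p hp0 _
  have hD0 : ∀ (f : 𝒜1 → 𝒜3) (a1 : 𝒜1) (a2 : 𝒜2),
      0 ≤ ∑ a1', if a1' ≠ a1 ∧ f a1' = f a1 then cprob p A1 A2 a1' a2 else 0 :=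
    fun f a1 a2 => Finset.sum_nonneg fun a1' _ => by
      split
      · exact hc0 a1' a2
      · exact le_refl 0
  have hsplit : ∀ (f : 𝒜1 → 𝒜3) (a1 : 𝒜1) (a2 : 𝒜2),
      (∑ a1', if f a1' = f a1 then cprob p A1 A2 a1' a2 else 0)
        = cprob p A1 A2 a1 a2
          + ∑ a1', if a1' ≠ a1 ∧ f a1' = f a1 then cprob p A1 A2 a1' a2 else 0 := by
    intro f a1 a2
    have hterm : ∀ a1', (if f a1' = f a1 then cprob p A1 A2 a1' a2 else 0)
        = (if a1' = a1 then cprob p A1 A2 a1 a2 else 0)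
          + (if a1' ≠ a1 ∧ f a1' = f a1 then cprob p A1 A2 a1' a2 else 0) := by
      intro a1'
      by_cases h1 : a1' = a1
      · subst h1; simp
      · by_cases h2 : f a1' = f a1 <;> simp [h1, h2]
    simp_rw [hterm, Finset.sum_add_distrib]
    rw [Finset.sum_ite_eq' univ a1 (fun _ => cprob p A1 A2 a1 a2), if_pos (mem_univ _)]
  have step1 : (∑ f : 𝒜1 → 𝒜3, mprob p F f *
        Real.exp (-ρ * condEntropy (condDist p F f) (fun ω => f (A1 ω)) A2))
      ≤ ∑ f : 𝒜1 → 𝒜3, ∑ a1, ∑ a2,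
          prEvent p (fun ω => A1 ω = a1 ∧ F ω = f ∧ A2 ω = a2)
            * (∑ a1', if f a1' = f a1 then cprob p A1 A2 a1' a2 else 0) ^ ρ :=
    Finset.sum_le_sum fun f _ => PA_claim1 p hp0 A1 A2 F hindep ρ f
  have step2 : (∑ f : 𝒜1 → 𝒜3, ∑ a1, ∑ a2,
          prEvent p (fun ω => A1 ω = a1 ∧ F ω = f ∧ A2 ω = a2)
            * (∑ a1', if f a1' = f a1 then cprob p A1 A2 a1' a2 else 0) ^ ρ)
      ≤ (∑ f : 𝒜1 → 𝒜3, ∑ a1, ∑ a2,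
          prEvent p (fun ω => A1 ω = a1 ∧ F ω = f ∧ A2 ω = a2)
            * cprob p A1 A2 a1 a2 ^ ρ)
        + ∑ f : 𝒜1 → 𝒜3, ∑ a1, ∑ a2,
            prEvent p (fun ω => A1 ω = a1 ∧ F ω = f ∧ A2 ω = a2)
              * (∑ a1', if a1' ≠ a1 ∧ f a1' = f a1 then cprob p A1 A2 a1' a2 else 0) ^ ρ := by
    rw [← Finset.sum_add_distrib]
    refine Finset.sum_le_sum fun f _ => ?_
    rw [← Finset.sum_add_distrib]
    refine Finset.sum_le_sum fun a1 _ => ?_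
    rw [← Finset.sum_add_distrib]
    refine Finset.sum_le_sum fun a2 _ => ?_
    rw [← mul_add, hsplit f a1 a2]
    exact mul_le_mul_of_nonneg_left
      (PA_rpow_add_le _ _ ρ (hc0 a1 a2) (hD0 f a1 a2) hρ0 hρ1) (hE0 a1 f a2)
  have claim3 : (∑ f : 𝒜1 → 𝒜3, ∑ a1, ∑ a2,
        prEvent p (fun ω => A1 ω = a1 ∧ F ω = f ∧ A2 ω = a2)
          * cprob p A1 A2 a1 a2 ^ ρ) = expPow p A1 A2 ρ := by
    rw [PA_rot2 (fun f a1 a2 => prEvent p (fun ω => A1 ω = a1 ∧ F ω = f ∧ A2 ω = a2)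
      * cprob p A1 A2 a1 a2 ^ ρ)]
    unfold expPow
    rw [PA_sum_fiber p A1 A2 (fun a1 a2 => cprob p A1 A2 a1 a2 ^ ρ)]
    refine Finset.sum_congr rfl fun a1 _ => Finset.sum_congr rfl fun a2 _ => ?_
    rw [← Finset.sum_mul, PA_sum_E3 p A1 F A2 a1 a2]
  have claim4 : (∑ f : 𝒜1 → 𝒜3, ∑ a1, ∑ a2,
        prEvent p (fun ω => A1 ω = a1 ∧ F ω = f ∧ A2 ω = a2)
          * (∑ a1', if a1' ≠ a1 ∧ f a1' = f a1 then cprob p A1 A2 a1' a2 else 0) ^ ρ)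
      ≤ (Fintype.card 𝒜3 : ℝ) ^ (-ρ) := by
    rw [PA_rot2 (fun f a1 a2 => prEvent p (fun ω => A1 ω = a1 ∧ F ω = f ∧ A2 ω = a2)
      * (∑ a1', if a1' ≠ a1 ∧ f a1' = f a1 then cprob p A1 A2 a1' a2 else 0) ^ ρ)]
    have hbound := fun (a1 : 𝒜1) (a2 : 𝒜2) =>
      PA_claim4 p hp0 A1 A2 F hindep htu ρ hρ0 hρ1 a1 a2
    calc ∑ a1, ∑ a2, ∑ f : 𝒜1 → 𝒜3,
          prEvent p (fun ω => A1 ω = a1 ∧ F ω = f ∧ A2 ω = a2)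
            * (∑ a1', if a1' ≠ a1 ∧ f a1' = f a1 then cprob p A1 A2 a1' a2 else 0) ^ ρ
        ≤ ∑ a1, ∑ a2, jprob p A1 A2 a1 a2 * (Fintype.card 𝒜3 : ℝ) ^ (-ρ) :=
          Finset.sum_le_sum fun a1 _ => Finset.sum_le_sum fun a2 _ => hbound a1 a2
      _ = (Fintype.card 𝒜3 : ℝ) ^ (-ρ) := by
          have hj1 : (∑ a1 : 𝒜1, ∑ a2 : 𝒜2, jprob p A1 A2 a1 a2) = 1 := by
            rw [Finset.sum_comm]
            simp_rw [PA_sum_jprob_left]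
            rw [PA_sum_mprob, hp1]
          simp_rw [← Finset.sum_mul]
          rw [hj1, one_mul]
  linarith [step1, step2, claim3, claim4, le_trans step1 step2]
end

section
/- Let q be a prime power, let B be an (mμ) × (mn) matrix over F_q with kernel ker(B) = { x ∈ F_q^{mn} : Bx = 0 } and image im(B) = { Bx : x ∈ F_q^{mn} }, and let ℒ be a subgroup of the group of all bijective F_q-linear maps on F_q^{mn}, with L uniformly distributed on ℒ. Then the family of functions { x ↦ BLx : L ∈ ℒ } (with uniformly distributed L) is a family of two-universal hash functions from F_q^{mn} to im(B) if and only if for every nonzero v ∈ F_q^{mn}, |O(v) ∩ ker(B)| / |O(v)| ≤ 1 / |im(B)|, where O(v) = { Lv : L ∈ ℒ } is the orbit of v under ℒ. -/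
/-- The orbit `O(z) = { Lz : L ∈ ℒ }` of a vector `z ∈ F^N` under a subgroup `ℒ`
of the group of all bijective linear maps (invertible matrices) on `F^N`. -/
def orbitSet {N : ℕ} {F : Type*} [Field F] [Fintype F] [DecidableEq F]
    (ℒ : Subgroup (GL (Fin N) F)) (z : Fin N → F) : Set (Fin N → F) :=
  {w | ∃ L ∈ ℒ, (L : Matrix (Fin N) (Fin N) F).mulVec z = w}

/-!
Write the collision event `B L x₁ = B L x₂` as `L (x₁ - x₂) ∈ ker B`. For a finite group `G`
acting on `X`, the map `g ↦ g • v` identifies `G / Stab(v)` with the orbit `O(v)`, so every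
point of `O(v)` has exactly `|Stab(v)|` preimages; hence the proportion of `g` with
`g • v ∈ K` equals `|O(v) ∩ K| / |O(v)|`. Since `x₁ - x₂` ranges over all nonzero vectors
(take `x₂ = 0`), the two conditions coincide.
-/

open MulAction Matrix

namespace MulAction

variable {G X : Type*} [Group G] [MulAction G X]

theorem ncard_setOf_smul_mem (v : X) (K : Set X) :
    {g : G | g • v ∈ K}.ncard = Nat.card (stabilizer G v) * (orbit G v ∩ K).ncard := by
  let e := orbitEquivQuotientStabilizer G v
  have hpre :
      {g : G | g • v ∈ K} = QuotientGroup.mk ⁻¹' (e.symm ⁻¹' (Subtype.val ⁻¹' K)) := by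
    ext g; simp [e]
  have hK : Nat.card (e.symm ⁻¹' (Subtype.val ⁻¹' K)) = (orbit G v ∩ K).ncard := by
    rw [Nat.card_coe_set_eq, Set.ncard_preimage_of_injective_subset_range e.symm.injective
      (by simp [e.symm.surjective.range_eq]), ← Subtype.image_preimage_coe,
      Set.ncard_image_of_injective _ Subtype.val_injective]
  rw [← Nat.card_coe_set_eq, hpre, QuotientGroup.card_preimage_mk, hK]

theorem card_eq_card_stabilizer_mul_ncard_orbit (v : X) :
    Nat.card G = Nat.card (stabilizer G v) * (orbit G v).ncard := by
  simpa using ncard_setOf_smul_mem (G := G) v Set.univ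

theorem ncard_setOf_smul_mem_div_card [Finite G] (v : X) (K : Set X) :
    ({g : G | g • v ∈ K}.ncard : ℝ) / Nat.card G
      = (orbit G v ∩ K).ncard / (orbit G v).ncard := by
  have hstab : (Nat.card (stabilizer G v) : ℝ) ≠ 0 := by
    exact_mod_cast Nat.card_pos.ne'
  rw [ncard_setOf_smul_mem, card_eq_card_stabilizer_mul_ncard_orbit (G := G) v]
  push_cast
  exact mul_div_mul_left _ _ hstab

end MulAction

namespace Matrix.GeneralLinearGroup

variable {ι R : Type*} [Fintype ι] [DecidableEq ι] [CommRing R]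

instance : MulAction (GL ι R) (ι → R) :=
  MulAction.compHom _ toLin.toMonoidHom

theorem smul_def (g : GL ι R) (x : ι → R) : g • x = (g : Matrix ι ι R) *ᵥ x :=
  rfl

theorem ncard_collision_eq {κ : Type*} (B : Matrix κ ι R) (ℒ : Subgroup (GL ι R))
    (x₁ x₂ : ι → R) :
    {L : GL ι R | L ∈ ℒ ∧
        B *ᵥ ((L : Matrix ι ι R) *ᵥ x₁) = B *ᵥ ((L : Matrix ι ι R) *ᵥ x₂)}.ncard
      = {L : ℒ | L • (x₁ - x₂) ∈ {x | B *ᵥ x = 0}}.ncard := by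
  have hcollide (L : GL ι R) :
      B *ᵥ ((L : Matrix ι ι R) *ᵥ x₁) = B *ᵥ ((L : Matrix ι ι R) *ᵥ x₂) ↔
        B *ᵥ (L • (x₁ - x₂)) = 0 := by
    rw [smul_def, mulVec_sub, mulVec_sub, sub_eq_zero]
  rw [← Nat.card_coe_set_eq, ← Nat.card_coe_set_eq]
  exact Nat.card_congr
    ⟨fun L => ⟨⟨L, L.2.1⟩, (hcollide L).1 L.2.2⟩,
      fun L => ⟨L.1, L.1.2, (hcollide L).2 L.2⟩, fun _ => rfl, fun _ => rfl⟩

theorem ncard_collision_div_card {κ : Type*} (B : Matrix κ ι R) (ℒ : Subgroup (GL ι R))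
    [Finite ℒ] (x₁ x₂ : ι → R) :
    ({L : GL ι R | L ∈ ℒ ∧
        B *ᵥ ((L : Matrix ι ι R) *ᵥ x₁) = B *ᵥ ((L : Matrix ι ι R) *ᵥ x₂)}.ncard : ℝ)
        / Nat.card ℒ
      = (orbit ℒ (x₁ - x₂) ∩ {x | B *ᵥ x = 0}).ncard
        / (orbit ℒ (x₁ - x₂)).ncard := by
  rw [ncard_collision_eq]
  exact ncard_setOf_smul_mem_div_card _ _

end Matrix.GeneralLinearGroup

theorem orbitSet_eq_orbit {N : ℕ} {F : Type*} [Field F] [Fintype F] [DecidableEq F]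
    (ℒ : Subgroup (GL (Fin N) F)) (z : Fin N → F) : orbitSet ℒ z = orbit ℒ z := by
  ext w
  constructor
  · rintro ⟨L, hL, rfl⟩
    exact ⟨⟨L, hL⟩, rfl⟩
  · rintro ⟨L, rfl⟩
    exact ⟨L, L.2, rfl⟩

theorem two_universal_iff_orbit_kernel_bound_general {F : Type*} [Field F] [Fintype F] [DecidableEq F]
    (m n μ : ℕ)
    (B : Matrix (Fin (m * μ)) (Fin (m * n)) F)
    (ℒ : Subgroup (GL (Fin (m * n)) F)) :
    (∀ x1 x2 : Fin (m * n) → F, x1 ≠ x2 →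
        (({L : GL (Fin (m * n)) F | L ∈ ℒ ∧
            B.mulVec ((L : Matrix (Fin (m * n)) (Fin (m * n)) F).mulVec x1)
              = B.mulVec ((L : Matrix (Fin (m * n)) (Fin (m * n)) F).mulVec x2)}.ncard : ℝ)
            / (Nat.card ℒ : ℝ)
          ≤ 1 / ((Set.range B.mulVec).ncard : ℝ)))
      ↔ (∀ v : Fin (m * n) → F, v ≠ 0 →
          (((orbitSet ℒ v ∩ {x | B.mulVec x = 0}).ncard : ℝ)
              / ((orbitSet ℒ v).ncard : ℝ)
            ≤ 1 / ((Set.range B.mulVec).ncard : ℝ))) := by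
  simp only [GeneralLinearGroup.ncard_collision_div_card, orbitSet_eq_orbit]
  refine ⟨fun h v hv => ?_, fun h x₁ x₂ hne => h _ (sub_ne_zero.2 hne)⟩
  simpa only [sub_zero] using h v 0 hv

/-- For an `(mμ) × (mn)` matrix `B` over `F_q` and a subgroup `ℒ`
of the bijective linear maps on `F_q^{mn}` with `L` uniformly distributed on `ℒ`,
the family `{x ↦ BLx : L ∈ ℒ}` is two-universal from `F_q^{mn}` to `im(B)`
(i.e. for all `x1 ≠ x2`, `Pr_L[BLx1 = BLx2] ≤ 1/|im B|`) if and only if every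
nonzero `v` satisfies `|O(v) ∩ ker B| / |O(v)| ≤ 1 / |im B|`. -/
theorem two_universal_iff_orbit_kernel_bound {F : Type*} [Field F] [Fintype F] [DecidableEq F]
    (m n μ : ℕ) (hm : 0 < m) (hn : 0 < n) (hμ : 0 < μ)
    (B : Matrix (Fin (m * μ)) (Fin (m * n)) F)
    (ℒ : Subgroup (GL (Fin (m * n)) F)) :
    (∀ x1 x2 : Fin (m * n) → F, x1 ≠ x2 →
        (({L : GL (Fin (m * n)) F | L ∈ ℒ ∧
            B.mulVec ((L : Matrix (Fin (m * n)) (Fin (m * n)) F).mulVec x1)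
              = B.mulVec ((L : Matrix (Fin (m * n)) (Fin (m * n)) F).mulVec x2)}.ncard : ℝ)
            / (Nat.card ℒ : ℝ)
          ≤ 1 / ((Set.range B.mulVec).ncard : ℝ)))
      ↔ (∀ v : Fin (m * n) → F, v ≠ 0 →
          (((orbitSet ℒ v ∩ {x | B.mulVec x = 0}).ncard : ℝ)
              / ((orbitSet ℒ v).ncard : ℝ)
            ≤ 1 / ((Set.range B.mulVec).ncard : ℝ))) :=
  two_universal_iff_orbit_kernel_bound_general m n μ B ℒ
end
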